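/- arXiv:1710.03796 — 2 statements merged into one kernel-verified Lean document; each statement's English description precedes it below -/
import Mathlib

section
/- Let {𝔘_α}_{α∈I} be a countable numerable open cover of X with subordinate partition of unity {λ_α}. Define X_𝔘 as the quotient of the disjoint union over strictly increasing sequences α = (i₀ < ... < i_k) in I of 𝔘_{i₀...i_k} × Δ^k by the face identifications (x; t₀,...,0,...,t_k) ∼ (x; t₀,...,t̂_j,...,t_k). Then the map λ : X → X_𝔘 sending x ∈ 𝔘_{i₀} ∩ ... ∩ 𝔘_{i_k} (where i₀ < ... < i_k are the indices with λ_{i_j}(x) > 0) to (x; λ_{i₀}(x),...,λ_{i_k}(x)) is a homotopy equivalence, with homotopy inverse the canonical projection p : X_𝔘 → X; moreover p ∘ λ = id_X and λ ∘ p is homotopic to id_{X_𝔘} via a linear (straight-line in barycentric coordinates) homotopy. -/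
open Set

variable {X : Type} [TopologicalSpace X]

/-- The disjoint union `⊔_{i₀ < ... < i_k} (𝔘_{i₀} ∩ ... ∩ 𝔘_{i_k}) × Δ^k` over all
strictly increasing finite sequences of indices. -/
def BlowupTotal (U : ℕ → Set X) : Type :=
  Σ (k : ℕ) (α : {a : Fin (k + 1) → ℕ // StrictMono a}),
    (⋂ j, U (α.1 j) : Set X) × (stdSimplex ℝ (Fin (k + 1)))

instance (U : ℕ → Set X) : TopologicalSpace (BlowupTotal U) :=
  inferInstanceAs (TopologicalSpace
    (Σ (k : ℕ) (α : {a : Fin (k + 1) → ℕ // StrictMono a}),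
      (⋂ j, U (α.1 j) : Set X) × (stdSimplex ℝ (Fin (k + 1)))))

/-- The face identifications `(x; t₀,...,0,...,t_k) ∼ (x; t₀,...,t̂_j,...,t_k)`. -/
def blowupRel (U : ℕ → Set X) : BlowupTotal U → BlowupTotal U → Prop :=
  fun a b => ∃ (k : ℕ) (α : Fin (k + 2) → ℕ) (hα : StrictMono α) (j : Fin (k + 2))
    (x : X) (hx : x ∈ ⋂ i, U (α i)) (t : stdSimplex ℝ (Fin (k + 1)))
    (t' : stdSimplex ℝ (Fin (k + 2))),
    (∀ i, (t' : Fin (k + 2) → ℝ) i =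
        ∑ m, if j.succAbove m = i then (t : Fin (k + 1) → ℝ) m else 0) ∧
    a = ⟨k + 1, ⟨α, hα⟩, ⟨x, hx⟩, t'⟩ ∧
    b = ⟨k, ⟨α ∘ j.succAbove, hα.comp (Fin.strictMono_succAbove j)⟩,
      ⟨x, by simp only [Set.mem_iInter] at hx ⊢; exact fun i => hx _⟩, t⟩

/-- The Mayer–Vietoris blow-up `X_𝔘` of the cover `𝔘`. -/
def Blowup (U : ℕ → Set X) : Type := Quot (blowupRel U)

instance (U : ℕ → Set X) : TopologicalSpace (Blowup U) :=
  inferInstanceAs (TopologicalSpace (Quot (blowupRel U)))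

/-- The canonical projection `p : X_𝔘 → X`. -/
def blowupProj (U : ℕ → Set X) : Blowup U → X :=
  Quot.lift (fun a => (a.2.2.1 : X)) (by
    rintro a b ⟨k, α, hα, j, x, hx, t, t', ht, rfl, rfl⟩; rfl)

theorem blowupProj_continuous (U : ℕ → Set X) : Continuous (blowupProj U) := by
  refine continuous_quot_lift _ (continuous_sigma fun k => continuous_sigma fun α => ?_)
  exact continuous_subtype_val.comp continuous_fst

/-- The canonical projection as a continuous map. -/
def blowupProjC (U : ℕ → Set X) : C(Blowup U, X) :=
  ⟨blowupProj U, blowupProj_continuous U⟩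

/-!
A point of the blow-up is a point `x` together with barycentric weights on a finite set of
indices `i` with `x ∈ U i`. The face identifications say precisely that indices of weight zero
may be added or dropped, so such a point (`Blowup.ofWeights`) depends only on `x` and on the
weight function. The partition of unity gives `λ x = (x; (λ_i x)_i)`, so `p ∘ λ = id` holds on the
nose, and `λ` is continuous because near every point all the weights involved are supported on one
fixed finite index set. The homotopy moves the weights of `(x; t)` linearly from `λ x` to `t`;
it is continuous on each simplex piece for the same reason and respects the face identifications
because these do not change the weight function.
-/

open Topology

theorem Fintype.sum_ite_apply_eq_of_injective {ι κ M : Type*} [Fintype ι] [DecidableEq κ]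
    [AddCommMonoid M] {α : ι → κ} (hα : Function.Injective α) (t : ι → M) (m₀ : ι) :
    ∑ m, (if α m = α m₀ then t m else 0) = t m₀ := by
  classical
  simp [hα.eq_iff]

theorem Finset.sum_orderEmbOfFin {ι M : Type*} [LinearOrder ι] [AddCommMonoid M] (S : Finset ι)
    {k : ℕ} (h : S.card = k) (w : ι → M) : ∑ j, w (S.orderEmbOfFin h j) = ∑ i ∈ S, w i := by
  simpa using (Finset.sum_map Finset.univ (S.orderEmbOfFin h).toEmbedding w).symm

theorem Finset.card_eq_card_sub_one_add_one_of_sum_eq_one {ι : Type*} {S : Finset ι}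
    {w : ι → ℝ} (hw : ∑ i ∈ S, w i = 1) : S.card = S.card - 1 + 1 :=
  (Nat.sub_one_add_one (Finset.card_ne_zero.2
    (Finset.nonempty_of_sum_ne_zero (hw ▸ one_ne_zero)))).symm

namespace PartitionOfUnity

variable {ι : Type*} {s : Set X} (ρ : PartitionOfUnity ι X s)

theorem apply_eq_zero_of_notMem_finsupport {x : X} {i : ι} (hi : i ∉ ρ.finsupport x) :
    ρ i x = 0 := by
  simpa [ρ.mem_finsupport] using hi

variable {ρ} {U : ι → Set X}

theorem IsSubordinate.mem_of_mem_finsupport (hsub : ρ.IsSubordinate U) {x : X} {i : ι}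
    (hi : i ∈ ρ.finsupport x) : x ∈ U i :=
  hsub i (subset_closure ((ρ.mem_finsupport x).1 hi))

theorem IsSubordinate.eventually_finsupport_subset_and_mem (hU : ∀ i, IsOpen (U i))
    (hsub : ρ.IsSubordinate U) (x₀ : X) :
    ∀ᶠ y in 𝓝 x₀, ρ.finsupport y ⊆ ρ.fintsupport x₀ ∧ ∀ i ∈ ρ.fintsupport x₀, y ∈ U i :=
  (ρ.eventually_finsupport_subset x₀).and ((Filter.eventually_all_finset _).2 fun i hi =>
    (hU i).mem_nhds (hsub i ((ρ.mem_fintsupport_iff x₀ i).1 hi)))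

end PartitionOfUnity

namespace BlowupTotal

section

variable {X : Type} {U : ℕ → Set X}

def point (a : BlowupTotal U) : X := a.2.2.1

def indices (a : BlowupTotal U) : Finset ℕ := Finset.univ.image a.2.1.1

noncomputable def weights (a : BlowupTotal U) (i : ℕ) : ℝ :=
  ∑ m, if a.2.1.1 m = i then (a.2.2.2 : Fin (a.1 + 1) → ℝ) m else 0

theorem point_mem (a : BlowupTotal U) {i : ℕ} (hi : i ∈ a.indices) : a.point ∈ U i := by
  obtain ⟨m, -, rfl⟩ := Finset.mem_image.1 hi
  exact mem_iInter.1 a.2.2.1.2 m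

theorem weights_nonneg (a : BlowupTotal U) (i : ℕ) : 0 ≤ a.weights i :=
  Finset.sum_nonneg fun m _ => by
    split_ifs
    exacts [a.2.2.2.2.1 m, le_rfl]

theorem weights_eq_zero (a : BlowupTotal U) {i : ℕ} (hi : i ∉ a.indices) : a.weights i = 0 :=
  Finset.sum_eq_zero fun m _ => if_neg fun h => hi (Finset.mem_image.2 ⟨m, Finset.mem_univ m, h⟩)

theorem sum_weights (a : BlowupTotal U) {T : Finset ℕ} (hT : a.indices ⊆ T) :
    ∑ i ∈ T, a.weights i = 1 := by
  unfold weights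
  rw [Finset.sum_comm]
  refine (Finset.sum_congr rfl fun m _ => ?_).trans a.2.2.2.2.2
  rw [Finset.sum_ite_eq]
  exact if_pos (hT (Finset.mem_image_of_mem _ (Finset.mem_univ m)))

theorem weights_apply (a : BlowupTotal U) (m : Fin (a.1 + 1)) :
    a.weights (a.2.1.1 m) = (a.2.2.2 : Fin (a.1 + 1) → ℝ) m :=
  Fintype.sum_ite_apply_eq_of_injective a.2.1.2.injective _ m

theorem weights_eq_of_rel {a b : BlowupTotal U} (hab : blowupRel U a b) :
    a.weights = b.weights := by
  obtain ⟨k, α, hα, j, x, hx, t, t', ht, rfl, rfl⟩ := hab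
  funext i
  have h₀ : (t' : Fin (k + 2) → ℝ) j = 0 := by rw [ht]; simp [Fin.succAbove_ne]
  have h₁ : ∀ m, (t' : Fin (k + 2) → ℝ) (j.succAbove m) = t m := fun m => by
    rw [ht]; exact Fintype.sum_ite_apply_eq_of_injective Fin.succAbove_right_injective _ m
  show ∑ v, (if α v = i then (t' : Fin (k + 2) → ℝ) v else 0) =
    ∑ m, if α (j.succAbove m) = i then (t : Fin (k + 1) → ℝ) m else 0
  simp [Fin.sum_univ_succAbove _ j, h₀, h₁]

theorem indices_subset_of_rel {a b : BlowupTotal U} (hab : blowupRel U a b) :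
    b.indices ⊆ a.indices := by
  obtain ⟨k, α, hα, j, x, hx, t, t', ht, rfl, rfl⟩ := hab
  exact Finset.image_subset_iff.2 fun m _ => Finset.mem_image_of_mem _ (Finset.mem_univ _)

end

theorem continuous_weights {U : ℕ → Set X} (k : ℕ) (α : {a : Fin (k + 1) → ℕ // StrictMono a})
    (i : ℕ) :
    Continuous fun q : (⋂ j, U (α.1 j) : Set X) × stdSimplex ℝ (Fin (k + 1)) =>
      weights ⟨k, α, q⟩ i := by
  show Continuous fun q : (⋂ j, U (α.1 j) : Set X) × stdSimplex ℝ (Fin (k + 1)) =>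
    ∑ m : Fin (k + 1), if α.1 m = i then (q.2 : Fin (k + 1) → ℝ) m else 0
  refine continuous_finsetSum _ fun m _ => ?_
  split_ifs
  · exact (continuous_apply m).comp (continuous_subtype_val.comp continuous_snd)
  · exact continuous_const

end BlowupTotal

namespace Blowup

section

variable {X : Type} {U : ℕ → Set X}

/-- The point `(x; w i₀, …, w i_k)` where `i₀ < ⋯ < i_k` enumerate `S`. The weights summing to
`1` make `S` nonempty, so `k = #S - 1` does not truncate. -/
noncomputable def ofWeights (S : Finset ℕ) (x : X) (hx : ∀ i ∈ S, x ∈ U i) (w : ℕ → ℝ)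
    (hw0 : ∀ i, 0 ≤ w i) (hw1 : ∑ i ∈ S, w i = 1) : Blowup U :=
  Quot.mk _ ⟨S.card - 1,
    ⟨S.orderEmbOfFin (S.card_eq_card_sub_one_add_one_of_sum_eq_one hw1),
      (S.orderEmbOfFin _).strictMono⟩,
    ⟨x, mem_iInter.2 fun j => hx _ (S.orderEmbOfFin_mem _ j)⟩,
    ⟨w ∘ S.orderEmbOfFin (S.card_eq_card_sub_one_add_one_of_sum_eq_one hw1),
      fun _ => hw0 _, (S.sum_orderEmbOfFin _ w).trans hw1⟩⟩

variable {S S' : Finset ℕ} {x : X} {hx : ∀ i ∈ S, x ∈ U i} {w : ℕ → ℝ} {hw0 : ∀ i, 0 ≤ w i}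
  {hw1 : ∑ i ∈ S, w i = 1}

theorem ofWeights_congr {w' : ℕ → ℝ} (hw : ∀ i ∈ S, w i = w' i) (hw0' : ∀ i, 0 ≤ w' i)
    (hw1' : ∑ i ∈ S, w' i = 1) :
    ofWeights S x hx w hw0 hw1 = ofWeights S x hx w' hw0' hw1' := by
  have h : w ∘ S.orderEmbOfFin (S.card_eq_card_sub_one_add_one_of_sum_eq_one hw1) =
      w' ∘ S.orderEmbOfFin (S.card_eq_card_sub_one_add_one_of_sum_eq_one hw1) :=
    funext fun j => hw _ (S.orderEmbOfFin_mem _ j)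
  unfold ofWeights
  simp_rw [h]
  rfl

theorem ofWeights_eq_mk {k : ℕ} {α : Fin (k + 1) → ℕ} (hα : StrictMono α)
    (hS : Set.range α = S) (hx' : x ∈ ⋂ j, U (α j)) (t : stdSimplex ℝ (Fin (k + 1)))
    (ht : ∀ j, (t : Fin (k + 1) → ℝ) j = w (α j)) :
    ofWeights S x hx w hw0 hw1 = Quot.mk _ ⟨k, ⟨α, hα⟩, ⟨x, hx'⟩, t⟩ := by
  have hS' : Finset.univ.image α = S := Finset.coe_injective (by simpa using hS)
  have hk : S.card = k + 1 := by
    rw [← hS', Finset.card_image_of_injective _ hα.injective, Finset.card_univ, Fintype.card_fin]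
  obtain rfl : k = S.card - 1 := by omega
  obtain rfl : α = S.orderEmbOfFin hk := Finset.orderEmbOfFin_unique hk
    (fun j => by rw [← Finset.mem_coe, ← hS]; exact mem_range_self j) hα
  obtain rfl : t = ⟨w ∘ S.orderEmbOfFin hk, fun _ => hw0 _, (S.sum_orderEmbOfFin hk w).trans hw1⟩ :=
    Subtype.ext (funext ht)
  rfl

theorem ofWeights_erase {i : ℕ} (hi : i ∈ S) (hwi : w i = 0)
    (hx' : ∀ j ∈ S.erase i, x ∈ U j) (hw1' : ∑ j ∈ S.erase i, w j = 1) :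
    ofWeights S x hx w hw0 hw1 = ofWeights (S.erase i) x hx' w hw0 hw1' := by
  have hk : S.card = S.card - 2 + 1 + 1 := by
    have := (S.erase i).card_eq_card_sub_one_add_one_of_sum_eq_one hw1'
    rw [Finset.card_erase_of_mem hi] at this
    omega
  set e := S.orderEmbOfFin hk
  obtain ⟨j, rfl⟩ : ∃ j, e j = i := by
    rw [← Set.mem_range, Finset.range_orderEmbOfFin]; exact hi
  have hx₁ : x ∈ ⋂ v, U (e v) := mem_iInter.2 fun v => hx _ (S.orderEmbOfFin_mem _ v)
  have hx₂ : x ∈ ⋂ m, U ((e ∘ j.succAbove) m) := by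
    simp only [mem_iInter] at hx₁ ⊢; exact fun m => hx₁ _
  have hrange : Set.range (e ∘ j.succAbove) = ↑(S.erase (e j)) := by
    rw [Set.range_comp, Fin.range_succAbove, Set.image_compl_eq_range_sdiff_image e.injective,
      Finset.range_orderEmbOfFin, Set.image_singleton, Finset.coe_erase]
  rw [ofWeights_eq_mk e.strictMono (S.range_orderEmbOfFin hk) hx₁ ⟨w ∘ e, fun v => hw0 _, ?_⟩
      fun _ => rfl,
    ofWeights_eq_mk (e.strictMono.comp (Fin.strictMono_succAbove j)) hrange hx₂
      ⟨w ∘ e ∘ j.succAbove, fun m => hw0 _, ?_⟩ fun _ => rfl]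
  · refine Quot.sound ⟨_, e, e.strictMono, j, x, hx₁, _, _, fun v => ?_, rfl, rfl⟩
    obtain rfl | ⟨m, rfl⟩ := j.eq_self_or_eq_succAbove v
    · show w (e v) = _
      simp [hwi, Fin.succAbove_ne]
    · exact (Fintype.sum_ite_apply_eq_of_injective Fin.succAbove_right_injective
        (fun m' => w (e (j.succAbove m'))) m).symm
  · have h := Fin.sum_univ_succAbove (fun v => w (e v)) j
    rwa [S.sum_orderEmbOfFin, hw1, hwi, zero_add, eq_comm] at h
  · exact (S.sum_orderEmbOfFin hk w).trans hw1

theorem ofWeights_eq_of_subset (hSS : S' ⊆ S) (hw : ∀ i ∈ S, i ∉ S' → w i = 0)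
    (hx' : ∀ i ∈ S', x ∈ U i) (hw1' : ∑ i ∈ S', w i = 1) :
    ofWeights S x hx w hw0 hw1 = ofWeights S' x hx' w hw0 hw1' := by
  induction h : (S \ S').card generalizing S with
  | zero =>
    obtain rfl : S = S' :=
      (Finset.sdiff_eq_empty_iff_subset.1 (Finset.card_eq_zero.1 h)).antisymm hSS
    rfl
  | succ n ih =>
    obtain ⟨i, hi⟩ : (S \ S').Nonempty := Finset.card_pos.1 (by omega)
    obtain ⟨hiS, hiS'⟩ := Finset.mem_sdiff.1 hi
    have hwi := hw i hiS hiS'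
    rw [ofWeights_erase hiS hwi (fun j hj => hx j (Finset.mem_of_mem_erase hj))
      (by rwa [Finset.sum_erase _ hwi])]
    refine ih (Finset.subset_erase.2 ⟨hSS, hiS'⟩)
      (fun j hj => hw j (Finset.mem_of_mem_erase hj)) ?_
    rw [Finset.erase_sdiff_comm, Finset.card_erase_of_mem hi, h, Nat.add_sub_cancel]

theorem mk_eq_ofWeights (a : BlowupTotal U) :
    Quot.mk _ a = ofWeights a.indices a.point (fun _ => a.point_mem) a.weights
      a.weights_nonneg (a.sum_weights subset_rfl) := by
  obtain ⟨k, ⟨α, hα⟩, ⟨x, hx⟩, t⟩ := a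
  refine (ofWeights_eq_mk hα (by simp [BlowupTotal.indices]) hx t fun m => ?_).symm
  exact (BlowupTotal.weights_apply (U := U) ⟨k, ⟨α, hα⟩, ⟨x, hx⟩, t⟩ m).symm

end

variable {U : ℕ → Set X}

section Continuity

variable {Y : Type*} [TopologicalSpace Y]

theorem continuous_ofWeights (S : Finset ℕ) {f : Y → X} (hf : Continuous f)
    (hfS : ∀ y, ∀ i ∈ S, f y ∈ U i) {w : Y → ℕ → ℝ} (hw : ∀ i, Continuous fun y => w y i)
    (hw0 : ∀ y i, 0 ≤ w y i) (hw1 : ∀ y, ∑ i ∈ S, w y i = 1) :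
    Continuous fun y => ofWeights S (f y) (hfS y) (w y) (hw0 y) (hw1 y) := by
  -- a point of `Y` is needed only to know that `S` is nonempty
  refine continuous_iff_continuousAt.2 fun y₀ => Continuous.continuousAt ?_
  have hk := S.card_eq_card_sub_one_add_one_of_sum_eq_one (hw1 y₀)
  have hpiece : Continuous fun y =>
      ((⟨f y, mem_iInter.2 fun j => hfS y _ (S.orderEmbOfFin_mem hk j)⟩,
      ⟨w y ∘ S.orderEmbOfFin hk, fun _ => hw0 y _, (S.sum_orderEmbOfFin hk _).trans (hw1 y)⟩) :
        (⋂ j, U (S.orderEmbOfFin hk j) : Set X) × stdSimplex ℝ (Fin (S.card - 1 + 1))) :=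
    (hf.subtype_mk _).prodMk ((continuous_pi fun j => hw _).subtype_mk _)
  have hmk : Continuous fun p => (⟨S.card - 1,
      ⟨S.orderEmbOfFin hk, (S.orderEmbOfFin hk).strictMono⟩, p⟩ : BlowupTotal U) :=
    continuous_sigmaMk.comp continuous_sigmaMk
  exact continuous_quot_mk.comp (hmk.comp hpiece)

theorem continuous_ofWeights_of_eventually_subset {S : Y → Finset ℕ} {f : Y → X}
    (hf : Continuous f) (hfS : ∀ y, ∀ i ∈ S y, f y ∈ U i) {w : Y → ℕ → ℝ}
    (hw : ∀ i, Continuous fun y => w y i) (hw0 : ∀ y i, 0 ≤ w y i)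
    (hw1 : ∀ y, ∑ i ∈ S y, w y i = 1) (hwS : ∀ y, ∀ i ∉ S y, w y i = 0)
    (hloc : ∀ y₀, ∃ T : Finset ℕ, ∀ᶠ y in 𝓝 y₀, S y ⊆ T ∧ ∀ i ∈ T, f y ∈ U i) :
    Continuous fun y => ofWeights (S y) (f y) (hfS y) (w y) (hw0 y) (hw1 y) := by
  refine continuous_iff_continuousAt.2 fun y₀ => ?_
  obtain ⟨T, hT⟩ := hloc y₀
  set V := {y | S y ⊆ T ∧ ∀ i ∈ T, f y ∈ U i}
  have hsumT : ∀ y : V, ∑ i ∈ T, w y i = 1 := fun y =>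
    (Finset.sum_subset y.2.1 fun i _ hi => hwS y i hi).symm.trans (hw1 y)
  have hV : V.domRestrict (fun y => ofWeights (S y) (f y) (hfS y) (w y) (hw0 y) (hw1 y)) =
      fun y : V => ofWeights T (f y) y.2.2 (w y) (hw0 y) (hsumT y) :=
    funext fun y => (ofWeights_eq_of_subset y.2.1 (fun i _ hi => hwS y i hi) (hfS y) (hw1 y)).symm
  refine ContinuousOn.continuousAt ?_ hT
  rw [continuousOn_iff_continuous_domRestrict, hV]
  exact continuous_ofWeights T (hf.comp continuous_subtype_val) _
    (fun i => (hw i).comp continuous_subtype_val) _ _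

end Continuity

noncomputable def straightLineWeights (pou : PartitionOfUnity ℕ X) (a : BlowupTotal U) (s : ℝ)
    (i : ℕ) : ℝ :=
  s * a.weights i + (1 - s) * pou i a.point

variable {pou : PartitionOfUnity ℕ X} (hsub : pou.IsSubordinate U)

noncomputable def toBlowup (x : X) : Blowup U :=
  ofWeights (pou.finsupport x) x (fun _ => hsub.mem_of_mem_finsupport) (fun i => pou i x)
    (fun i => pou.nonneg i x) (pou.sum_finsupport (mem_univ x))

theorem continuous_toBlowup (hU : ∀ i, IsOpen (U i)) : Continuous (toBlowup hsub) :=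
  continuous_ofWeights_of_eventually_subset continuous_id _ (fun i => (pou i).continuous) _ _
    (fun _ _ => pou.apply_eq_zero_of_notMem_finsupport)
    fun x₀ => ⟨pou.fintsupport x₀, hsub.eventually_finsupport_subset_and_mem hU x₀⟩

theorem exists_toBlowup_eq_mk (x : X) :
    ∃ (k : ℕ) (α : Fin (k + 1) → ℕ) (hα : StrictMono α)
      (hx : x ∈ ⋂ j, U (α j)) (pt : stdSimplex ℝ (Fin (k + 1))),
      (∀ j, (pt : Fin (k + 1) → ℝ) j = pou (α j) x) ∧
      (∀ j, 0 < pou (α j) x) ∧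
      (∀ i, (∀ j, α j ≠ i) → pou i x = 0) ∧
      toBlowup hsub x = Quot.mk _ ⟨k, ⟨α, hα⟩, ⟨x, hx⟩, pt⟩ := by
  have hk := (pou.finsupport x).card_eq_card_sub_one_add_one_of_sum_eq_one
    (pou.sum_finsupport (mem_univ x))
  set e := (pou.finsupport x).orderEmbOfFin hk
  refine ⟨_, e, e.strictMono, mem_iInter.2 fun j => hsub.mem_of_mem_finsupport
      (Finset.orderEmbOfFin_mem _ hk j),
    ⟨fun j => pou (e j) x, fun j => pou.nonneg _ x, ((pou.finsupport x).sum_orderEmbOfFin hk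
      (pou · x)).trans (pou.sum_finsupport (mem_univ x))⟩,
    fun _ => rfl, fun j => ?_, fun i hi => ?_, rfl⟩
  · exact (pou.nonneg _ x).lt_of_ne' ((pou.mem_finsupport x).1 (Finset.orderEmbOfFin_mem _ hk j))
  · refine pou.apply_eq_zero_of_notMem_finsupport fun hmem => ?_
    obtain ⟨j, hj⟩ : i ∈ Set.range e := by rw [Finset.range_orderEmbOfFin]; exact hmem
    exact hi j hj

theorem straightLineWeights_nonneg (a : BlowupTotal U) (s : unitInterval) (i : ℕ) :
    0 ≤ straightLineWeights pou a s i :=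
  add_nonneg (mul_nonneg s.2.1 (a.weights_nonneg i))
    (mul_nonneg (sub_nonneg.2 s.2.2) (pou.nonneg i _))

theorem sum_straightLineWeights (a : BlowupTotal U) (s : ℝ) {T : Finset ℕ}
    (h₁ : a.indices ⊆ T) (h₂ : pou.finsupport a.point ⊆ T) :
    ∑ i ∈ T, straightLineWeights pou a s i = 1 := by
  unfold straightLineWeights
  rw [Finset.sum_add_distrib, ← Finset.mul_sum, ← Finset.mul_sum, a.sum_weights h₁,
    pou.sum_finsupport' (mem_univ _) h₂]
  ring

theorem straightLineWeights_eq_zero (a : BlowupTotal U) (s : ℝ) {i : ℕ}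
    (hi : i ∉ a.indices ∪ pou.finsupport a.point) : straightLineWeights pou a s i = 0 := by
  rw [Finset.mem_union, not_or] at hi
  rw [straightLineWeights, a.weights_eq_zero hi.1, pou.apply_eq_zero_of_notMem_finsupport hi.2]
  ring

noncomputable def straightLine (a : BlowupTotal U) (s : unitInterval) : Blowup U :=
  ofWeights (a.indices ∪ pou.finsupport a.point) a.point
    (fun _ hi => (Finset.mem_union.1 hi).elim a.point_mem hsub.mem_of_mem_finsupport)
    (straightLineWeights pou a s) (straightLineWeights_nonneg a s)
    (sum_straightLineWeights a s Finset.subset_union_left Finset.subset_union_right)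

theorem straightLine_zero (a : BlowupTotal U) :
    straightLine hsub a 0 = toBlowup hsub a.point := by
  refine (ofWeights_congr (fun i _ => by simp [straightLineWeights]) (fun i => pou.nonneg i _)
    (pou.sum_finsupport' (mem_univ _) Finset.subset_union_right)).trans ?_
  exact ofWeights_eq_of_subset Finset.subset_union_right
    (fun i _ hi => pou.apply_eq_zero_of_notMem_finsupport hi) _ _

theorem straightLine_one (a : BlowupTotal U) : straightLine hsub a 1 = Quot.mk _ a := by
  refine (ofWeights_congr (fun i _ => by simp [straightLineWeights]) a.weights_nonneg
    (a.sum_weights Finset.subset_union_left)).trans ?_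
  exact (ofWeights_eq_of_subset Finset.subset_union_left
    (fun i _ hi => a.weights_eq_zero hi) _ _).trans (mk_eq_ofWeights a).symm

theorem straightLine_eq_of_rel {a b : BlowupTotal U} (hab : blowupRel U a b) :
    straightLine hsub a = straightLine hsub b := by
  have hw := BlowupTotal.weights_eq_of_rel hab
  have hI := BlowupTotal.indices_subset_of_rel hab
  obtain ⟨k, α, hα, j, x, hx, t, t', ht, rfl, rfl⟩ := hab
  funext s
  refine (ofWeights_congr (fun i _ => by simp only [straightLineWeights, hw]; rfl)
    (straightLineWeights_nonneg _ s)
    (sum_straightLineWeights _ s (hI.trans Finset.subset_union_left)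
      Finset.subset_union_right)).trans ?_
  exact ofWeights_eq_of_subset (Finset.union_subset_union hI subset_rfl)
    (fun i _ hi => straightLineWeights_eq_zero _ s hi) _ _

theorem continuous_straightLine_sigma (hU : ∀ i, IsOpen (U i)) (k : ℕ)
    (α : {a : Fin (k + 1) → ℕ // StrictMono a}) :
    Continuous fun p : ((⋂ j, U (α.1 j) : Set X) × stdSimplex ℝ (Fin (k + 1))) × unitInterval =>
      straightLine hsub ⟨k, α, p.1⟩ p.2 := by
  have hx : Continuous fun p : ((⋂ j, U (α.1 j) : Set X) × stdSimplex ℝ (Fin (k + 1))) ×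
      unitInterval => (p.1.1 : X) :=
    continuous_subtype_val.comp (continuous_fst.comp continuous_fst)
  have hs : Continuous fun p : ((⋂ j, U (α.1 j) : Set X) × stdSimplex ℝ (Fin (k + 1))) ×
      unitInterval => (p.2 : ℝ) :=
    continuous_subtype_val.comp continuous_snd
  refine continuous_ofWeights_of_eventually_subset hx _ (fun i => ?_) _ _
    (fun p i hi => straightLineWeights_eq_zero _ _ hi) fun p₀ =>
      ⟨BlowupTotal.indices (U := U) ⟨k, α, p₀.1⟩ ∪ pou.fintsupport p₀.1.1, ?_⟩
  · exact (hs.mul ((BlowupTotal.continuous_weights k α i).comp continuous_fst)).add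
      ((continuous_const.sub hs).mul ((pou i).continuous.comp hx))
  · refine ((hx.tendsto p₀).eventually (hsub.eventually_finsupport_subset_and_mem hU _)).mono
      fun p hp => ⟨Finset.union_subset_union subset_rfl hp.1, fun i hi => ?_⟩
    exact (Finset.mem_union.1 hi).elim (BlowupTotal.point_mem ⟨k, α, p.1⟩) (hp.2 i)

noncomputable def straightLinePath (a : BlowupTotal U) : C(unitInterval, Blowup U) :=
  ⟨straightLine hsub a, continuous_ofWeights _ continuous_const _
    (fun _ => (continuous_subtype_val.mul continuous_const).add
      ((continuous_const.sub continuous_subtype_val).mul continuous_const)) _ _⟩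

theorem continuous_straightLinePath (hU : ∀ i, IsOpen (U i)) :
    Continuous (straightLinePath hsub) :=
  continuous_sigma fun k => continuous_sigma fun α =>
    (ContinuousMap.curry ⟨_, continuous_straightLine_sigma hsub hU k α⟩).continuous

noncomputable def toBlowupC (hU : ∀ i, IsOpen (U i)) : C(X, Blowup U) :=
  ⟨toBlowup hsub, continuous_toBlowup hsub hU⟩

noncomputable def straightLineHomotopy (hU : ∀ i, IsOpen (U i)) :
    ContinuousMap.Homotopy ((toBlowupC hsub hU).comp (blowupProjC U))
      (ContinuousMap.id (Blowup U)) where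
  toFun p := Quot.lift (straightLinePath hsub)
    (fun _ _ h => ContinuousMap.ext (congrFun (straightLine_eq_of_rel hsub h))) p.2 p.1
  continuous_toFun := (ContinuousMap.uncurry
    ⟨_, continuous_quot_lift _ (continuous_straightLinePath hsub hU)⟩).continuous.comp
      continuous_swap
  map_zero_left := Quot.ind (straightLine_zero hsub)
  map_one_left := Quot.ind (straightLine_one hsub)

end Blowup

theorem blowup_homotopyEquiv_general (U : ℕ → Set X) (hU : ∀ i, IsOpen (U i))
    (pou : PartitionOfUnity ℕ X)
    (hsub : pou.IsSubordinate U) :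
    ∃ lam : C(X, Blowup U),
      (∀ x : X, ∃ (k : ℕ) (α : Fin (k + 1) → ℕ) (hα : StrictMono α)
        (hx : x ∈ ⋂ j, U (α j)) (pt : stdSimplex ℝ (Fin (k + 1))),
        (∀ j, (pt : Fin (k + 1) → ℝ) j = pou (α j) x) ∧
        (∀ j, 0 < pou (α j) x) ∧
        (∀ i, (∀ j, α j ≠ i) → pou i x = 0) ∧
        lam x = Quot.mk _ ⟨k, ⟨α, hα⟩, ⟨x, hx⟩, pt⟩) ∧
      (∀ x, blowupProjC U (lam x) = x) ∧
      Nonempty (ContinuousMap.Homotopy (lam.comp (blowupProjC U))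
        (ContinuousMap.id (Blowup U))) :=
  ⟨Blowup.toBlowupC hsub hU, Blowup.exists_toBlowup_eq_mk hsub, fun _ => rfl,
    ⟨Blowup.straightLineHomotopy hsub hU⟩⟩

/-- for a countable numerable open cover `𝔘` with subordinate partition
of unity `{λ_α}`, the map `λ : X → X_𝔘`, `x ↦ (x; λ_{i₀}(x), ..., λ_{i_k}(x))` (where
`i₀ < ... < i_k` are the indices with `λ_i(x) > 0`), is a homotopy equivalence with
homotopy inverse the canonical projection `p : X_𝔘 → X`; moreover `p ∘ λ = id` and
`λ ∘ p` is homotopic to the identity of `X_𝔘`. -/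
theorem blowup_homotopyEquiv (U : ℕ → Set X) (hU : ∀ i, IsOpen (U i))
    (hcov : ⋃ i, U i = univ) (pou : PartitionOfUnity ℕ X)
    (hsub : pou.IsSubordinate U) :
    ∃ lam : C(X, Blowup U),
      (∀ x : X, ∃ (k : ℕ) (α : Fin (k + 1) → ℕ) (hα : StrictMono α)
        (hx : x ∈ ⋂ j, U (α j)) (pt : stdSimplex ℝ (Fin (k + 1))),
        (∀ j, (pt : Fin (k + 1) → ℝ) j = pou (α j) x) ∧
        (∀ j, 0 < pou (α j) x) ∧
        (∀ i, (∀ j, α j ≠ i) → pou i x = 0) ∧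
        lam x = Quot.mk _ ⟨k, ⟨α, hα⟩, ⟨x, hx⟩, pt⟩) ∧
      (∀ x, blowupProjC U (lam x) = x) ∧
      Nonempty (ContinuousMap.Homotopy (lam.comp (blowupProjC U))
        (ContinuousMap.id (Blowup U))) :=
  blowup_homotopyEquiv_general U hU pou hsub
end

section
/- The assignment τ_{n,k} : X_n × Sd_k(Δ^n) → X_k × S_k × Δ^k sending (x, A₀ ⊂ ... ⊂ A_k, t) to (u*x, |A₀| < |A₁| < ... < |A_k|, t), where u : [k] → [n] is j ↦ max(A_j), is compatible with face maps: if y = d_i*x ∈ X_{n-1} and B₀ ⊂ ... ⊂ B_k are subsets of [n-1] mapped bijectively by the coface d_i onto A₀ ⊂ ... ⊂ A_k ⊂ [n]∖{i}, then the images of (x, A₀⊂...⊂A_k) and (y, B₀⊂...⊂B_k) agree in ||X × S||; hence τ induces a well-defined continuous map τ : ||X|| → ||X × S||. -/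
open Set

/-- A simplicial space: spaces `X n` of `n`-simplices and a continuous, functorial
action of the monotone maps `[m] → [n]`. -/
structure SimpSpace where
  X : ℕ → Type
  [top : ∀ n, TopologicalSpace (X n)]
  map : ∀ {m n : ℕ}, (Fin (m + 1) →o Fin (n + 1)) → X n → X m
  continuous_map : ∀ {m n : ℕ} (φ : Fin (m + 1) →o Fin (n + 1)), Continuous (map φ)
  map_id : ∀ (n : ℕ) (x : X n), map (OrderHom.id (α := Fin (n + 1))) x = x
  map_comp : ∀ {m n p : ℕ} (φ : Fin (m + 1) →o Fin (n + 1))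
    (ψ : Fin (n + 1) →o Fin (p + 1)) (x : X p), map φ (map ψ x) = map (ψ.comp φ) x

attribute [instance] SimpSpace.top

/-- Strictly increasing sequences `[k] → ℕ`: the `k`-simplices of the semi-simplicial
set `S`. -/
def SIdx (k : ℕ) : Type := {g : Fin (k + 1) → ℕ // StrictMono g}

instance (k : ℕ) : TopologicalSpace (SIdx k) := ⊥

/-- Total space of the fat realization `||X||`. -/
def FatTotal (X : SimpSpace) : Type :=
  Σ n : ℕ, X.X n × ↥(stdSimplex ℝ (Fin (n + 1)))

instance (X : SimpSpace) : TopologicalSpace (FatTotal X) :=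
  inferInstanceAs (TopologicalSpace (Σ n : ℕ, X.X n × ↥(stdSimplex ℝ (Fin (n + 1)))))

/-- Face identifications: identifications along strictly increasing maps only. -/
def fatRel (X : SimpSpace) : FatTotal X → FatTotal X → Prop :=
  fun a b => ∃ (m n : ℕ) (φ : Fin (m + 1) → Fin (n + 1)) (hφ : StrictMono φ)
    (x : X.X n) (t : stdSimplex ℝ (Fin (m + 1))) (t' : stdSimplex ℝ (Fin (n + 1))),
    (∀ i, (t' : Fin (n + 1) → ℝ) i =
        ∑ j, if φ j = i then (t : Fin (m + 1) → ℝ) j else 0) ∧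
    a = ⟨m, X.map ⟨φ, hφ.monotone⟩ x, t⟩ ∧ b = ⟨n, x, t'⟩

/-- The fat realization `||X||`. -/
def FatReal (X : SimpSpace) : Type := Quot (fatRel X)

instance (X : SimpSpace) : TopologicalSpace (FatReal X) :=
  inferInstanceAs (TopologicalSpace (Quot (fatRel X)))

/-- Total space of the fat realization `||X × S||`. -/
def FatSTotal (X : SimpSpace) : Type :=
  Σ n : ℕ, (X.X n × SIdx n) × ↥(stdSimplex ℝ (Fin (n + 1)))

instance (X : SimpSpace) : TopologicalSpace (FatSTotal X) :=
  inferInstanceAs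
    (TopologicalSpace (Σ n : ℕ, (X.X n × SIdx n) × ↥(stdSimplex ℝ (Fin (n + 1)))))

/-- Face identifications for `X × S`. -/
def fatSRel (X : SimpSpace) : FatSTotal X → FatSTotal X → Prop :=
  fun a b => ∃ (m n : ℕ) (φ : Fin (m + 1) → Fin (n + 1)) (hφ : StrictMono φ)
    (x : X.X n) (g : SIdx n)
    (t : stdSimplex ℝ (Fin (m + 1))) (t' : stdSimplex ℝ (Fin (n + 1))),
    (∀ i, (t' : Fin (n + 1) → ℝ) i =
        ∑ j, if φ j = i then (t : Fin (m + 1) → ℝ) j else 0) ∧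
    a = ⟨m, (X.map ⟨φ, hφ.monotone⟩ x, ⟨g.1 ∘ φ, g.2.comp hφ⟩), t⟩ ∧ b = ⟨n, (x, g), t'⟩

/-- The fat realization `||X × S||`. -/
def FatSReal (X : SimpSpace) : Type := Quot (fatSRel X)

instance (X : SimpSpace) : TopologicalSpace (FatSReal X) :=
  inferInstanceAs (TopologicalSpace (Quot (fatSRel X)))

/-- A `k`-simplex of the barycentric subdivision `Sd Δ^n`: a strictly increasing
chain `A₀ ⊊ A₁ ⊊ ... ⊊ A_k` of nonempty subsets of `[n]`. -/
def SdChain (n k : ℕ) : Type :=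
  {A : Fin (k + 1) → Finset (Fin (n + 1)) //
    (∀ j, (A j).Nonempty) ∧ ∀ i j, i < j → A i ⊂ A j}

/-- The monotone map `u : [k] → [n]`, `j ↦ max A_j`, of a chain. -/
def maxMap {n k : ℕ} (A : SdChain n k) : Fin (k + 1) →o Fin (n + 1) where
  toFun j := (A.1 j).max' (A.2.1 j)
  monotone' i j hij := by
    rcases eq_or_lt_of_le hij with rfl | h
    · exact le_refl _
    · exact Finset.max'_subset _ (A.2.2 i j h).subset

/-- The strictly increasing sequence `|A₀| < |A₁| < ... < |A_k|` of a chain. -/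
def cardSeq {n k : ℕ} (A : SdChain n k) : SIdx k :=
  ⟨fun j => (A.1 j).card, fun i j hij => Finset.card_lt_card (A.2.2 i j hij)⟩

/-- The point of `Δ^n` corresponding to a point `t` of the subdivision simplex of the
chain `A`, i.e. `∑ⱼ tⱼ · (barycenter of A_j)`. -/
noncomputable def sdPoint {n k : ℕ} (A : SdChain n k)
    (t : stdSimplex ℝ (Fin (k + 1))) : ↥(stdSimplex ℝ (Fin (n + 1))) :=
  ⟨fun v => ∑ j, (t : Fin (k + 1) → ℝ) j *
      (if v ∈ A.1 j then ((A.1 j).card : ℝ)⁻¹ else 0), by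
    constructor
    · intro v
      refine Finset.sum_nonneg fun j _ => mul_nonneg (t.2.1 j) ?_
      split
      · positivity
      · exact le_refl 0
    · rw [Finset.sum_comm]
      have h : ∀ j : Fin (k + 1),
          (∑ v, (t : Fin (k + 1) → ℝ) j *
            (if v ∈ A.1 j then ((A.1 j).card : ℝ)⁻¹ else 0)) = (t : Fin (k + 1) → ℝ) j := by
        intro j
        rw [← Finset.mul_sum, Finset.sum_ite_mem, Finset.univ_inter, Finset.sum_const,
          nsmul_eq_mul, mul_inv_cancel₀, mul_one]
        exact_mod_cast Finset.card_ne_zero.2 (A.2.1 j)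
      rw [Finset.sum_congr rfl fun j _ => h j]
      exact t.2.2⟩

/-!
A point `s ∈ Δ^n` with `s ∘ σ` antitone lies in the subdivision simplex of the flag
`{σ 0} ⊂ {σ 0, σ 1} ⊂ ⋯`, with weights `wⱼ = (j + 1) (s (σ j) - s (σ (j + 1)))`, so `τ` can be
defined on `‖X‖` through a sorting permutation. The choice does not matter: if `s = sdPoint A t`,
then after discarding the `A_j` with `t_j = 0` every `A_j` is a superlevel set of `s`, hence the
`(|A_j| - 1)`-st set of the flag, and `w` is `t` placed at those positions, so the two
representatives are related by a face identification of `X × S`. Face maps of `X` move chains by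
injective images, which preserve `j ↦ max A_j` and the cardinalities, so `τ` descends to `‖X‖`; it
is continuous on each of the finitely many closed cells `{s ∘ σ antitone}`.
-/

open Finset

namespace SdChain

variable {n k m N : ℕ}

lemma mono (A : SdChain n k) {i j : Fin (k + 1)} (hij : i ≤ j) : A.1 i ⊆ A.1 j := by
  rcases hij.eq_or_lt with rfl | h
  · exact Finset.Subset.rfl
  · exact (A.2.2 i j h).subset

lemma card_pos (A : SdChain n k) (j : Fin (k + 1)) : 0 < #(A.1 j) :=
  Finset.card_pos.2 (A.2.1 j)

lemma card_le (A : SdChain n k) (j : Fin (k + 1)) : #(A.1 j) ≤ n + 1 := by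
  simpa using card_le_univ (A.1 j)

lemma card_lt_card (A : SdChain n k) {i j : Fin (k + 1)} (hij : i < j) :
    #(A.1 i) < #(A.1 j) :=
  Finset.card_lt_card (A.2.2 i j hij)

def comp (A : SdChain n k) (δ : Fin (m + 1) → Fin (k + 1)) (hδ : StrictMono δ) : SdChain n m :=
  ⟨fun j => A.1 (δ j), fun _ => A.2.1 _, fun _ _ hij => A.2.2 _ _ (hδ hij)⟩

def map (A : SdChain n k) (φ : Fin (n + 1) → Fin (N + 1)) (hφ : StrictMono φ) : SdChain N k :=
  ⟨fun j => (A.1 j).image φ, fun j => (A.2.1 j).image φ,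
    fun i j hij => (image_ssubset_image hφ.injective).2 (A.2.2 i j hij)⟩

lemma maxMap_comp (A : SdChain n k) {δ : Fin (m + 1) → Fin (k + 1)} (hδ : StrictMono δ) :
    maxMap (A.comp δ hδ) = (maxMap A).comp ⟨δ, hδ.monotone⟩ :=
  rfl

lemma cardSeq_comp (A : SdChain n k) {δ : Fin (m + 1) → Fin (k + 1)} (hδ : StrictMono δ) :
    cardSeq (A.comp δ hδ) = ⟨(cardSeq A).1 ∘ δ, (cardSeq A).2.comp hδ⟩ :=
  rfl

lemma maxMap_map (A : SdChain n k) {φ : Fin (n + 1) → Fin (N + 1)} (hφ : StrictMono φ) :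
    maxMap (A.map φ hφ) = (⟨φ, hφ.monotone⟩ : Fin (n + 1) →o Fin (N + 1)).comp (maxMap A) :=
  OrderHom.ext _ _ <| funext fun j => max'_image hφ.monotone _ ((A.2.1 j).image φ)

lemma cardSeq_map (A : SdChain n k) {φ : Fin (n + 1) → Fin (N + 1)} (hφ : StrictMono φ) :
    cardSeq (A.map φ hφ) = cardSeq A :=
  Subtype.ext <| funext fun _ => card_image_of_injective _ hφ.injective

def flag (σ : Equiv.Perm (Fin (n + 1))) : SdChain n n :=
  ⟨fun j => (Finset.Iic j).image σ, fun _ => Finset.nonempty_Iic.image σ,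
    fun _ _ hij => (image_ssubset_image σ.injective).2 (Finset.Iic_ssubset_Iic.2 hij)⟩

lemma mem_flag {σ : Equiv.Perm (Fin (n + 1))} {j v : Fin (n + 1)} :
    v ∈ (flag σ).1 j ↔ σ.symm v ≤ j := by
  simp [flag, ← Equiv.eq_symm_apply]

lemma card_flag (σ : Equiv.Perm (Fin (n + 1))) (j : Fin (n + 1)) :
    #((flag σ).1 j) = j + 1 := by
  simp [flag, card_image_of_injective _ σ.injective]

end SdChain

section Weights

variable {n k m : ℕ}

lemma Finset.exists_strictMono_range_eq {α : Type*} [LinearOrder α] (J : Finset α)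
    (hJ : J.Nonempty) : ∃ (m : ℕ) (δ : Fin (m + 1) → α), StrictMono δ ∧ Set.range δ = J :=
  ⟨#J - 1, J.orderEmbOfFin (by have := hJ.card_pos; omega), OrderEmbedding.strictMono _,
    range_orderEmbOfFin _ _⟩

lemma sum_ite_eq_extend {α β : Type*} [Fintype α] [DecidableEq β] {φ : α → β}
    (hφ : Function.Injective φ) (f : α → ℝ) (b : β) :
    (∑ a, if φ a = b then f a else 0) = Function.extend φ f 0 b := by
  by_cases hb : ∃ a, φ a = b
  · obtain ⟨a, rfl⟩ := hb
    rw [hφ.extend_apply, sum_eq_single a (fun a' _ ha' => if_neg (hφ.ne ha')) (by simp), if_pos rfl]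
  · rw [Function.extend_apply' _ _ _ hb]
    exact sum_eq_zero fun a _ => if_neg fun h => hb ⟨a, h⟩

lemma exists_strictMono_extend_eq (t : stdSimplex ℝ (Fin (k + 1))) :
    ∃ (m : ℕ) (δ : Fin (m + 1) → Fin (k + 1)) (_ : StrictMono δ) (r : stdSimplex ℝ (Fin (m + 1))),
      (∀ j, 0 < r.1 j) ∧ t.1 = Function.extend δ r.1 0 := by
  obtain ⟨m, δ, hδ, hrange⟩ := (univ.filter fun i => t.1 i ≠ 0).exists_strictMono_range_eq <| by
    obtain ⟨i, -, hi⟩ := exists_ne_zero_of_sum_ne_zero (t.2.2.symm ▸ one_ne_zero : ∑ i, t.1 i ≠ 0)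
    exact ⟨i, by simpa using hi⟩
  have hsupp : ∀ i, ¬(∃ j, δ j = i) → t.1 i = 0 := fun i hi => by
    simpa [← Set.mem_range, hrange] using hi
  refine ⟨m, δ, hδ, ⟨t.1 ∘ δ, fun _ => t.2.1 _,
    (Fintype.sum_of_injective δ hδ.injective _ _ hsupp fun _ => rfl).trans t.2.2⟩,
    fun j => (t.2.1 _).lt_of_ne' ?_, funext fun i => ?_⟩
  · simpa [← Set.mem_range, hrange] using Set.mem_range_self (f := δ) j
  · by_cases hi : ∃ j, δ j = i
    · obtain ⟨j, rfl⟩ := hi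
      exact (hδ.injective.extend_apply (t.1 ∘ δ) 0 j).symm
    · rw [Function.extend_apply' _ _ _ hi]
      exact hsupp i hi

lemma sdPoint_apply (A : SdChain n k) (t : stdSimplex ℝ (Fin (k + 1))) (v : Fin (n + 1)) :
    (sdPoint A t).1 v = ∑ j, t.1 j * if v ∈ A.1 j then (#(A.1 j) : ℝ)⁻¹ else 0 :=
  rfl

lemma sdPoint_comp (A : SdChain n k) {δ : Fin (m + 1) → Fin (k + 1)} (hδ : StrictMono δ)
    (r : stdSimplex ℝ (Fin (m + 1))) (t : stdSimplex ℝ (Fin (k + 1)))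
    (ht : t.1 = Function.extend δ r.1 0) :
    sdPoint (A.comp δ hδ) r = sdPoint A t :=
  Subtype.ext <| funext fun v => by
    rw [sdPoint_apply, sdPoint_apply]
    exact Fintype.sum_of_injective δ hδ.injective _ _
      (fun i hi => by simp only [ht, Function.extend_apply' _ _ _ hi, Pi.zero_apply, zero_mul])
      (fun j => by simp only [ht, hδ.injective.extend_apply]; rfl)

lemma sdPoint_map (A : SdChain n k) {φ : Fin (n + 1) → Fin (m + 1)} (hφ : StrictMono φ)
    (r : stdSimplex ℝ (Fin (k + 1))) :
    (sdPoint (A.map φ hφ) r).1 = Function.extend φ (sdPoint A r).1 0 := by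
  funext v
  by_cases hv : ∃ i, φ i = v
  · obtain ⟨i, rfl⟩ := hv
    simp [hφ.injective.extend_apply, sdPoint, SdChain.map, hφ.injective.eq_iff,
      card_image_of_injective _ hφ.injective]
  · simp [sdPoint, SdChain.map, not_exists.1 hv]

/-- Every `A_j` containing `w` also contains `v`, and `A_l` contains `v` but not `w`. -/
lemma sdPoint_lt_of_mem_of_notMem (A : SdChain n k) (t : stdSimplex ℝ (Fin (k + 1)))
    {l : Fin (k + 1)} (hl : 0 < t.1 l) {v w : Fin (n + 1)} (hv : v ∈ A.1 l) (hw : w ∉ A.1 l) :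
    (sdPoint A t).1 w < (sdPoint A t).1 v := by
  refine sum_lt_sum (fun j _ => mul_le_mul_of_nonneg_left ?_ (t.2.1 j)) ⟨l, mem_univ l, ?_⟩
  · have hwv : w ∈ A.1 j → v ∈ A.1 j := fun hwj => by
      rcases le_total j l with hjl | hlj
      · exact absurd (A.mono hjl hwj) hw
      · exact A.mono hlj hv
    split_ifs with hwj hvj
    exacts [le_rfl, absurd (hwv hwj) hvj, by positivity, le_rfl]
  · rw [if_neg hw, if_pos hv, mul_zero]
    exact mul_pos hl (inv_pos.2 (Nat.cast_pos.2 (A.card_pos l)))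

end Weights

section Flag

variable {n k : ℕ}

lemma mem_iff_lt_card_of_antitone {s : Fin (n + 1) → ℝ} {σ : Equiv.Perm (Fin (n + 1))}
    (hσ : Antitone (s ∘ σ)) {S : Finset (Fin (n + 1))} (hS : ∀ v ∈ S, ∀ w ∉ S, s w < s v)
    (p : Fin (n + 1)) : σ p ∈ S ↔ (p : ℕ) < #S := by
  have hdown : ∀ {a b : Fin (n + 1)}, b ≤ a → σ a ∈ S → σ b ∈ S := fun hba ha => by
    by_contra hb
    exact (hS _ ha _ hb).not_ge (hσ hba)
  constructor
  · intro hp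
    have := card_le_card_of_injOn σ (s := Finset.Iic p)
      (fun q hq => hdown (Finset.mem_Iic.1 hq) hp) σ.injective.injOn
    rw [Fin.card_Iic] at this
    omega
  · intro hp
    by_contra hnot
    have := card_le_card_of_injOn σ.symm (t := Finset.Iio p)
      (fun v hv => Finset.mem_Iio.2 <| lt_of_not_ge fun hle => hnot <|
        hdown hle (by simpa using hv)) σ.symm.injective.injOn
    rw [Fin.card_Iio] at this
    omega

noncomputable def antitoneSort (s : Fin (n + 1) → ℝ) : Equiv.Perm (Fin (n + 1)) :=
  Tuple.sort (OrderDual.toDual ∘ s)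

lemma antitone_comp_antitoneSort (s : Fin (n + 1) → ℝ) : Antitone (s ∘ antitoneSort s) :=
  monotone_toDual_comp_iff.1 (Tuple.monotone_sort _)

noncomputable def sortedValue (σ : Equiv.Perm (Fin (n + 1))) (s : Fin (n + 1) → ℝ) (p : ℕ) : ℝ :=
  if h : p < n + 1 then s (σ ⟨p, h⟩) else 0

lemma sortedValue_coe (σ : Equiv.Perm (Fin (n + 1))) (s : Fin (n + 1) → ℝ) (p : Fin (n + 1)) :
    sortedValue σ s p = s (σ p) :=
  dif_pos p.isLt

lemma sortedValue_of_le (σ : Equiv.Perm (Fin (n + 1))) (s : Fin (n + 1) → ℝ) {p : ℕ}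
    (hp : n + 1 ≤ p) : sortedValue σ s p = 0 :=
  dif_neg hp.not_gt

/-- The barycenter of `{σ 0, …, σ j}` has mass `1 / (j + 1)` at each vertex, so writing
`s = ∑ⱼ wⱼ · bary{σ 0, …, σ j}` forces `s (σ p) = ∑_{j ≥ p} wⱼ / (j + 1)`, whence this formula. -/
noncomputable def flagWeights (σ : Equiv.Perm (Fin (n + 1))) (s : Fin (n + 1) → ℝ) :
    Fin (n + 1) → ℝ :=
  fun j => (j + 1 : ℝ) * (sortedValue σ s j - sortedValue σ s (j + 1))

lemma flagWeights_nonneg {σ : Equiv.Perm (Fin (n + 1))} {s : Fin (n + 1) → ℝ} (hs : 0 ≤ s)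
    (hσ : Antitone (s ∘ σ)) (j : Fin (n + 1)) : 0 ≤ flagWeights σ s j := by
  refine mul_nonneg (by positivity) (sub_nonneg.2 ?_)
  rw [sortedValue_coe]
  by_cases hj : (j : ℕ) + 1 < n + 1
  · rw [show (j : ℕ) + 1 = ((⟨j + 1, hj⟩ : Fin (n + 1)) : ℕ) from rfl, sortedValue_coe]
    exact hσ (Fin.le_def.2 (Nat.le_succ _))
  · rw [sortedValue_of_le _ _ (not_lt.1 hj)]
    exact hs _

lemma sum_range_succ_mul_sub (W : ℕ → ℝ) (N : ℕ) :
    ∑ j ∈ range N, (j + 1 : ℝ) * (W j - W (j + 1)) = ∑ j ∈ range N, W j - N * W N := by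
  induction N with
  | zero => simp
  | succ N ih => rw [sum_range_succ, sum_range_succ, ih]; push_cast; ring

lemma sum_flagWeights (σ : Equiv.Perm (Fin (n + 1))) (s : Fin (n + 1) → ℝ) :
    ∑ j, flagWeights σ s j = ∑ v, s v := by
  simp only [flagWeights]
  rw [Fin.sum_univ_eq_sum_range
      (fun j => (j + 1 : ℝ) * (sortedValue σ s j - sortedValue σ s (j + 1))),
    sum_range_succ_mul_sub, sortedValue_of_le _ _ le_rfl, mul_zero, sub_zero,
    ← Fin.sum_univ_eq_sum_range]
  simp only [sortedValue_coe]
  exact Equiv.sum_comp σ s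

lemma flagWeights_mem {σ : Equiv.Perm (Fin (n + 1))} {s : Fin (n + 1) → ℝ}
    (hs : s ∈ stdSimplex ℝ (Fin (n + 1))) (hσ : Antitone (s ∘ σ)) :
    flagWeights σ s ∈ stdSimplex ℝ (Fin (n + 1)) :=
  ⟨flagWeights_nonneg hs.1 hσ, (sum_flagWeights σ s).trans hs.2⟩

noncomputable def flagPoint (σ : Equiv.Perm (Fin (n + 1))) (s : stdSimplex ℝ (Fin (n + 1)))
    (hσ : Antitone (s.1 ∘ σ)) : stdSimplex ℝ (Fin (n + 1)) :=
  ⟨flagWeights σ s.1, flagWeights_mem s.2 hσ⟩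

lemma sdPoint_flag_flagPoint (σ : Equiv.Perm (Fin (n + 1))) (s : stdSimplex ℝ (Fin (n + 1)))
    (hσ : Antitone (s.1 ∘ σ)) : sdPoint (SdChain.flag σ) (flagPoint σ s hσ) = s := by
  refine Subtype.ext <| funext fun v => ?_
  set W := sortedValue σ s.1
  have hterm : ∀ j : Fin (n + 1), flagWeights σ s.1 j *
      (if v ∈ (SdChain.flag σ).1 j then (#((SdChain.flag σ).1 j) : ℝ)⁻¹ else 0) =
      if (σ.symm v : ℕ) ≤ j then W j - W (j + 1) else 0 := fun j => by
    rw [SdChain.card_flag]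
    by_cases h : σ.symm v ≤ j
    · rw [if_pos (SdChain.mem_flag.2 h), if_pos (Fin.le_def.1 h)]
      simp only [flagWeights, W]
      push_cast
      field_simp
    · rw [if_neg (mt SdChain.mem_flag.1 h), if_neg (mt Fin.le_def.2 h), mul_zero]
  rw [sdPoint_apply]
  simp only [flagPoint, hterm]
  rw [Fin.sum_univ_eq_sum_range (fun j => if (σ.symm v : ℕ) ≤ j then W j - W (j + 1) else 0),
    ← sum_filter, show (range (n + 1)).filter (fun j => (σ.symm v : ℕ) ≤ j) =
      Finset.Ico (σ.symm v : ℕ) (n + 1) by ext; simp; omega,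
    sum_Ico_eq_sub _ (σ.symm v).isLt.le, sum_range_sub', sum_range_sub',
    show W (n + 1) = 0 from sortedValue_of_le _ _ le_rfl,
    show W (σ.symm v) = s.1 v by simp [W, sortedValue_coe]]
  ring

lemma flagWeights_eq_sum {σ : Equiv.Perm (Fin (n + 1))} {s : Fin (n + 1) → ℝ}
    (t : Fin (k + 1) → ℝ) (c : Fin (k + 1) → ℕ)
    (hs : ∀ q : ℕ, sortedValue σ s q = ∑ l, t l * if q < c l then (c l : ℝ)⁻¹ else 0)
    (p : Fin (n + 1)) : flagWeights σ s p = ∑ l, if c l = p + 1 then t l else 0 := by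
  rw [flagWeights, hs, hs, ← sum_sub_distrib, mul_sum]
  refine sum_congr rfl fun l _ => ?_
  by_cases hl : c l = p + 1
  · simp [hl]
    field_simp
  · rw [if_neg hl, ← mul_sub, if_congr (show (p : ℕ) < c l ↔ (p : ℕ) + 1 < c l by omega) rfl rfl,
      sub_self, mul_zero, mul_zero]

lemma sortedValue_sdPoint {σ : Equiv.Perm (Fin (n + 1))} (A : SdChain n k)
    (t : stdSimplex ℝ (Fin (k + 1))) (hA : ∀ l p, σ p ∈ A.1 l ↔ (p : ℕ) < #(A.1 l)) (q : ℕ) :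
    sortedValue σ (sdPoint A t).1 q =
      ∑ l, t.1 l * if q < #(A.1 l) then (#(A.1 l) : ℝ)⁻¹ else 0 := by
  rcases lt_or_ge q (n + 1) with hq | hq
  · rw [show q = ((⟨q, hq⟩ : Fin (n + 1)) : ℕ) from rfl, sortedValue_coe, sdPoint_apply]
    simp only [hA]
  · rw [sortedValue_of_le _ _ hq]
    refine (sum_eq_zero fun l _ => ?_).symm
    rw [if_neg (by have := A.card_le l; omega), mul_zero]

lemma isClosed_setOf_antitone_comp (σ : Equiv.Perm (Fin (n + 1))) :
    IsClosed {s : Fin (n + 1) → ℝ | Antitone (s ∘ σ)} := by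
  simp only [Antitone, Function.comp_apply, Set.ofPred_forall]
  exact isClosed_iInter fun i => isClosed_iInter fun j => isClosed_iInter fun _ =>
    isClosed_le (continuous_apply _) (continuous_apply _)

lemma continuous_flagWeights (σ : Equiv.Perm (Fin (n + 1))) : Continuous (flagWeights σ) := by
  have hW : ∀ p, Continuous fun s : Fin (n + 1) → ℝ => sortedValue σ s p := fun p => by
    unfold sortedValue
    split_ifs
    exacts [continuous_apply _, continuous_const]
  exact continuous_pi fun j => continuous_const.mul ((hW j).sub (hW (j + 1)))

end Flag

namespace SimpSpace

variable (X : SimpSpace) {n k m : ℕ}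

/-- `τ_{n,k}(x, A, t)`, as a point of the total space of `‖X × S‖`. -/
def tau (x : X.X n) (A : SdChain n k) (t : stdSimplex ℝ (Fin (k + 1))) : FatSTotal X :=
  ⟨k, (X.map (maxMap A) x, cardSeq A), t⟩

lemma tau_map {φ : Fin (n + 1) → Fin (m + 1)} (hφ : StrictMono φ) (x : X.X m) (A : SdChain n k)
    (t : stdSimplex ℝ (Fin (k + 1))) :
    X.tau (X.map ⟨φ, hφ.monotone⟩ x) A t = X.tau x (A.map φ hφ) t := by
  rw [tau, tau, X.map_comp, SdChain.maxMap_map, SdChain.cardSeq_map]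

lemma mk_tau_comp (x : X.X n) (A : SdChain n k) {δ : Fin (m + 1) → Fin (k + 1)}
    (hδ : StrictMono δ) (r : stdSimplex ℝ (Fin (m + 1))) (t : stdSimplex ℝ (Fin (k + 1)))
    (ht : t.1 = Function.extend δ r.1 0) :
    Quot.mk (fatSRel X) (X.tau x (A.comp δ hδ) r) = Quot.mk (fatSRel X) (X.tau x A t) := by
  refine Quot.sound ⟨m, k, δ, hδ, X.map (maxMap A) x, cardSeq A, r, t,
    fun i => (congrFun ht i).trans (sum_ite_eq_extend hδ.injective _ _).symm, ?_, rfl⟩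
  rw [tau, SdChain.maxMap_comp, ← X.map_comp, SdChain.cardSeq_comp]

lemma continuous_tau (A : SdChain n k) :
    Continuous fun p : X.X n × stdSimplex ℝ (Fin (k + 1)) => X.tau p.1 A p.2 :=
  continuous_sigmaMk.comp <|
    (((X.continuous_map _).comp continuous_fst).prodMk continuous_const).prodMk continuous_snd

/-- With all weights positive, every `A_j` is a superlevel set of `s = sdPoint A t`, hence equals
`(flag σ)_{|A_j| - 1}`, and the flag weights are `t` placed at the positions `|A_j| - 1`. -/
lemma mk_tau_flag_of_pos (x : X.X n) (A : SdChain n k) (t : stdSimplex ℝ (Fin (k + 1)))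
    (ht : ∀ j, 0 < t.1 j) (σ : Equiv.Perm (Fin (n + 1))) (s : stdSimplex ℝ (Fin (n + 1)))
    (hs : sdPoint A t = s) (hσ : Antitone (s.1 ∘ σ)) :
    Quot.mk (fatSRel X) (X.tau x (SdChain.flag σ) (flagPoint σ s hσ)) =
      Quot.mk (fatSRel X) (X.tau x A t) := by
  subst hs
  have hmem : ∀ l p, σ p ∈ A.1 l ↔ (p : ℕ) < #(A.1 l) := fun l =>
    mem_iff_lt_card_of_antitone hσ fun _ hv _ hw => sdPoint_lt_of_mem_of_notMem A t (ht l) hv hw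
  let φ : Fin (k + 1) → Fin (n + 1) := fun l => ⟨#(A.1 l) - 1, by have := A.card_le l; omega⟩
  have hφ : ∀ l, (φ l : ℕ) + 1 = #(A.1 l) := fun l => by
    have := A.card_pos l
    simp only [φ]
    omega
  have hφmono : StrictMono φ := fun i j hij => by
    rw [Fin.lt_def, ← Nat.add_lt_add_iff_right (k := 1), hφ, hφ]
    exact A.card_lt_card hij
  have hchain : (SdChain.flag σ).comp φ hφmono = A := Subtype.ext <| funext fun l =>
    Finset.ext fun v => by
      rw [← σ.apply_symm_apply v, hmem, SdChain.comp, SdChain.mem_flag, Equiv.symm_apply_apply,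
        Fin.le_def, ← hφ]
      omega
  have hweights : (flagPoint σ (sdPoint A t) hσ).1 = Function.extend φ t.1 0 := by
    funext p
    rw [← sum_ite_eq_extend hφmono.injective]
    exact (flagWeights_eq_sum t.1 _ (sortedValue_sdPoint A t hmem) p).trans <|
      sum_congr rfl fun l _ => if_congr (by rw [← hφ, Fin.ext_iff]; omega) rfl rfl
  have := X.mk_tau_comp x (SdChain.flag σ) hφmono t _ hweights
  rw [hchain] at this
  exact this.symm

lemma mk_tau_flag (x : X.X n) (A : SdChain n k) (t : stdSimplex ℝ (Fin (k + 1)))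
    (σ : Equiv.Perm (Fin (n + 1))) (s : stdSimplex ℝ (Fin (n + 1)))
    (hs : sdPoint A t = s) (hσ : Antitone (s.1 ∘ σ)) :
    Quot.mk (fatSRel X) (X.tau x (SdChain.flag σ) (flagPoint σ s hσ)) =
      Quot.mk (fatSRel X) (X.tau x A t) := by
  obtain ⟨m, δ, hδ, r, hr, ht⟩ := exists_strictMono_extend_eq t
  rw [X.mk_tau_flag_of_pos x (A.comp δ hδ) r hr σ s ((sdPoint_comp A hδ r t ht).trans hs) hσ]
  exact X.mk_tau_comp x A hδ r t ht

noncomputable def tauTotal : FatTotal X → FatSReal X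
  | ⟨_, x, s⟩ => Quot.mk (fatSRel X) (X.tau x (SdChain.flag (antitoneSort s.1))
      (flagPoint _ s (antitone_comp_antitoneSort s.1)))

lemma tauTotal_sdPoint (x : X.X n) (A : SdChain n k) (t : stdSimplex ℝ (Fin (k + 1))) :
    X.tauTotal ⟨n, x, sdPoint A t⟩ = Quot.mk (fatSRel X) (X.tau x A t) :=
  X.mk_tau_flag x A t _ _ rfl _

lemma tauTotal_eq_of_antitone (x : X.X n) (s : stdSimplex ℝ (Fin (n + 1)))
    {σ : Equiv.Perm (Fin (n + 1))} (hσ : Antitone (s.1 ∘ σ)) :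
    X.tauTotal ⟨n, x, s⟩ = Quot.mk (fatSRel X) (X.tau x (SdChain.flag σ) (flagPoint σ s hσ)) :=
  X.mk_tau_flag x _ _ _ s (sdPoint_flag_flagPoint σ s hσ) _

lemma tauTotal_eq_of_fatRel (a b : FatTotal X) (hab : fatRel X a b) :
    X.tauTotal a = X.tauTotal b := by
  obtain ⟨m, n, φ, hφ, x, t, t', ht', rfl, rfl⟩ := hab
  set σ := antitoneSort t.1
  set B := SdChain.flag σ
  set r := flagPoint σ t (antitone_comp_antitoneSort t.1)
  have hB : sdPoint B r = t := sdPoint_flag_flagPoint σ t _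
  have hB' : sdPoint (B.map φ hφ) r = t' := Subtype.ext <| by
    rw [sdPoint_map, hB]
    exact funext fun i => ((ht' i).trans (sum_ite_eq_extend hφ.injective _ _)).symm
  rw [← hB, ← hB', tauTotal_sdPoint, tauTotal_sdPoint, tau_map]

lemma continuous_tauTotal : Continuous X.tauTotal := by
  refine continuous_sigma fun n => LocallyFinite.continuous
    (f := fun σ : Equiv.Perm (Fin (n + 1)) =>
      {p : X.X n × stdSimplex ℝ (Fin (n + 1)) | Antitone (p.2.1 ∘ σ)})
    (locallyFinite_of_finite _)
    (Set.iUnion_eq_univ_iff.2 fun p => ⟨_, antitone_comp_antitoneSort p.2.1⟩)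
    (fun σ => (isClosed_setOf_antitone_comp σ).preimage
      (continuous_subtype_val.comp continuous_snd))
    fun σ => continuousOn_iff_continuous_domRestrict.2 ?_
  refine Continuous.congr (f := fun q => Quot.mk (fatSRel X)
      (X.tau q.1.1 (SdChain.flag σ) (flagPoint σ q.1.2 q.2))) ?_
    fun q => (X.tauTotal_eq_of_antitone q.1.1 q.1.2 q.2).symm
  exact continuous_quot_mk.comp <| (X.continuous_tau _).comp <|
    (continuous_fst.comp continuous_subtype_val).prodMk <| Continuous.subtype_mk
      ((continuous_flagWeights σ).comp <| continuous_subtype_val.comp <|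
        continuous_snd.comp continuous_subtype_val) _

end SimpSpace

/-- the subdivision assignment
`τ_{n,k} : (x, A₀ ⊂ ... ⊂ A_k, t) ↦ (u*x, |A₀| < ... < |A_k|, t)`, `u(j) = max A_j`,
is compatible with face maps — if `y = dᵢ* x` and the coface `dᵢ` maps the chain `B`
bijectively onto the chain `A` (which avoids `i`), then the images agree in
`||X × S||` — and hence induces a well-defined continuous map
`τ : ||X|| → ||X × S||`. -/
theorem tau_compatible_and_welldefined (X : SimpSpace) :
    (∀ (n k : ℕ) (x : X.X (n + 1)) (i : Fin (n + 2)) (A : SdChain (n + 1) k)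
      (B : SdChain n k) (y : X.X n) (t : stdSimplex ℝ (Fin (k + 1))),
      y = X.map ⟨i.succAbove, (Fin.strictMono_succAbove i).monotone⟩ x →
      (∀ j, Finset.image i.succAbove (B.1 j) = A.1 j) →
      (Quot.mk (fatSRel X) ⟨k, (X.map (maxMap A) x, cardSeq A), t⟩ =
        Quot.mk (fatSRel X) ⟨k, (X.map (maxMap B) y, cardSeq B), t⟩)) ∧
    ∃ τ : C(FatReal X, FatSReal X),
      ∀ (n k : ℕ) (x : X.X n) (A : SdChain n k) (t : stdSimplex ℝ (Fin (k + 1))),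
        τ (Quot.mk (fatRel X) ⟨n, x, sdPoint A t⟩) =
          Quot.mk (fatSRel X) ⟨k, (X.map (maxMap A) x, cardSeq A), t⟩ := by
  refine ⟨fun n k x i A B y t hy himg => ?_,
    ⟨Quot.lift X.tauTotal X.tauTotal_eq_of_fatRel, continuous_quot_lift _ X.continuous_tauTotal⟩,
    fun n k x A t => X.tauTotal_sdPoint x A t⟩
  obtain rfl : A = B.map i.succAbove (Fin.strictMono_succAbove i) :=
    Subtype.ext <| funext fun j => (himg j).symm
  subst hy
  exact congrArg (Quot.mk (fatSRel X)) (X.tau_map _ x B t).symm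
end
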